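/- arXiv:math/0604208 — 5 statements merged into one kernel-verified Lean document; each statement's English description precedes it below -/
import Mathlib

section
/- The extended tropical semiring (T, ⊕, ⊙) is a commutative semiring with zero element -∞ and unit element 0; in particular ⊕ is associative and commutative, ⊙ distributes over ⊕, and ⊙ is associative and commutative. -/
/-- The extended tropical semiring `T = ℝ ∪ ℝ^ν ∪ {-∞}`:
`bot` is `-∞`, `real a` is the real element `a`, `ghost a` is `a^ν`. -/
inductive T : Type where
  | bot : T
  | real : ℝ → T
  | ghost : ℝ → T

namespace T

noncomputable section

/-- Tropical addition `⊕` (max with respect to `-∞ ≺ a ≺ a^ν`, ties become ghosts). -/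
def add : T → T → T
  | bot, y => y
  | real a, bot => real a
  | ghost a, bot => ghost a
  | real a, real b => if a < b then real b else if b < a then real a else ghost a
  | real a, ghost b => if b < a then real a else ghost b
  | ghost a, real b => if a < b then real b else ghost a
  | ghost a, ghost b => ghost (max a b)

/-- Tropical multiplication `⊙` (addition of underlying reals, ghosts absorb). -/
def mul : T → T → T
  | bot, _ => bot
  | real _, bot => bot
  | ghost _, bot => bot
  | real a, real b => real (a + b)
  | real a, ghost b => ghost (a + b)
  | ghost a, real b => ghost (a + b)
  | ghost a, ghost b => ghost (a + b)

/-- The total order `⪯` on `T`: `-∞` least, order of reals, `a ≺ a^ν`. -/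
def le : T → T → Prop
  | bot, _ => True
  | real _, bot => False
  | real a, real b => a ≤ b
  | real a, ghost b => a ≤ b
  | ghost _, bot => False
  | ghost a, real b => a < b
  | ghost a, ghost b => a ≤ b

/-- Membership in the ghost ideal `U̅ = U ∪ {-∞}`. -/
def IsGhost : T → Prop
  | bot => True
  | real _ => False
  | ghost _ => True

/-- Membership in `ℝ ∪ {-∞}` (non-ghost elements). -/
def RealOrBot : T → Prop
  | bot => True
  | real _ => True
  | ghost _ => False

/-- The ghost map `ν`. -/
def nu : T → T
  | bot => bot
  | real a => ghost a
  | ghost a => ghost a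

/-- Tropical sum of a list. -/
def sumList : List T → T := fun l => l.foldr add bot

/-- Tropical sum over a finite index set. -/
def sum {α : Type*} (s : Finset α) (f : α → T) : T := sumList (s.toList.map f)

/-- Tropical product of a list. -/
def prodList : List T → T := fun l => l.foldr mul (real 0)

/-- The weight of a permutation `σ` in a matrix: `a_{1,σ(1)} ⊙ ⋯ ⊙ a_{n,σ(n)}`. -/
def permProd {n : ℕ} (A : Matrix (Fin n) (Fin n) T) (σ : Equiv.Perm (Fin n)) : T :=
  prodList ((List.finRange n).map fun i => A i (σ i))

/-- The tropical determinant (permanent) `|A| = ⨁_σ a_{1,σ(1)} ⊙ ⋯ ⊙ a_{n,σ(n)}`. -/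
def det {n : ℕ} (A : Matrix (Fin n) (Fin n) T) : T :=
  sum (Finset.univ : Finset (Equiv.Perm (Fin n))) (fun σ => permProd A σ)

/-- Tropical dependence of a family of `m` vectors in `T^(n)`:
some tropical linear combination with coefficients in `ℝ ∪ {-∞}`, not all `-∞`,
lands in the ghost part `U̅^(n)`. -/
def Dependent {m n : ℕ} (v : Fin m → Fin n → T) : Prop :=
  ∃ α : Fin m → T, (∀ i, RealOrBot (α i)) ∧ (∃ i, α i ≠ bot) ∧
    ∀ j, IsGhost (sum Finset.univ fun i => mul (α i) (v i j))

/-- The tropical rank: maximal number of tropically independent rows. -/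
def rk {m n : ℕ} (A : Matrix (Fin m) (Fin n) T) : ℕ :=
  sSup {k | ∃ f : Fin k → Fin m, Function.Injective f ∧ ¬ Dependent (fun i => A (f i))}

end

end T

section AuxStmt0

private lemma aux_add_comm : ∀ x y : T, T.add x y = T.add y x := by
  intro x y
  rcases x with _|a|a <;> rcases y with _|b|b <;>
    simp only [T.add, max_def] <;> (try split_ifs) <;>
    first | rfl | linarith | (congr 1; linarith)

private lemma aux_add_assoc : ∀ x y z : T, T.add (T.add x y) z = T.add x (T.add y z) := by
  intro x y z
  rcases x with _|a|a <;> rcases y with _|b|b <;> rcases z with _|c|c <;>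
    simp only [T.add, max_def] <;> (try split_ifs) <;>
    (try simp only [T.add, max_def]) <;> (try split_ifs) <;>
    first | rfl | linarith | (congr 1; linarith)

private lemma aux_mul_comm : ∀ x y : T, T.mul x y = T.mul y x := by
  intro x y
  rcases x with _|a|a <;> rcases y with _|b|b <;> simp only [T.mul] <;> congr 1 <;> ring

private lemma aux_mul_assoc : ∀ x y z : T, T.mul (T.mul x y) z = T.mul x (T.mul y z) := by
  intro x y z
  rcases x with _|a|a <;> rcases y with _|b|b <;> rcases z with _|c|c <;>
    simp only [T.mul] <;> congr 1 <;> ring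

set_option linter.unusedTactic false in
private lemma aux_distrib : ∀ x y z : T, T.mul x (T.add y z) = T.add (T.mul x y) (T.mul x z) := by
  intro x y z
  rcases x with _|a|a <;> rcases y with _|b|b <;> rcases z with _|c|c <;>
    simp only [T.mul, T.add, max_def] <;> (try split_ifs) <;>
    (try simp only [T.mul, T.add, max_def]) <;> (try split_ifs) <;>
    first | rfl | linarith | (congr 1; linarith)

end AuxStmt0

/-- `(T, ⊕, ⊙)` is a commutative semiring with zero `-∞` and unit `0`. -/

theorem stmt0 :
    (∀ x y z : T, T.add (T.add x y) z = T.add x (T.add y z)) ∧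
    (∀ x y : T, T.add x y = T.add y x) ∧
    (∀ x : T, T.add T.bot x = x) ∧
    (∀ x : T, T.add x T.bot = x) ∧
    (∀ x y z : T, T.mul (T.mul x y) z = T.mul x (T.mul y z)) ∧
    (∀ x y : T, T.mul x y = T.mul y x) ∧
    (∀ x : T, T.mul (T.real 0) x = x) ∧
    (∀ x : T, T.mul x (T.real 0) = x) ∧
    (∀ x : T, T.mul T.bot x = T.bot) ∧
    (∀ x : T, T.mul x T.bot = T.bot) ∧
    (∀ x y z : T, T.mul x (T.add y z) = T.add (T.mul x y) (T.mul x z)) ∧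
    (∀ x y z : T, T.mul (T.add x y) z = T.add (T.mul x z) (T.mul y z)) := by
  refine ⟨aux_add_assoc, aux_add_comm, ?_, ?_, aux_mul_assoc, aux_mul_comm, ?_, ?_, ?_, ?_,
    aux_distrib, ?_⟩
  · intro x; rcases x with _|a|a <;> rfl
  · intro x; rcases x with _|a|a <;> rfl
  · intro x; rcases x with _|a|a <;> simp [T.mul]
  · intro x; rcases x with _|a|a <;> simp [T.mul]
  · intro x; rcases x with _|a|a <;> rfl
  · intro x; rcases x with _|a|a <;> rfl
  · intro x y z
    rw [aux_mul_comm, aux_distrib, aux_mul_comm z x, aux_mul_comm z y]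
end

section
/- The vectors v₁ = (1,1,-∞), v₂ = (1,-∞,1), v₃ = (-∞,1,1) in T^(3) are tropically dependent, yet none of them can be written as a tropical linear combination (with coefficients in T) of the other two. -/
namespace T

noncomputable def w₁ : Fin 3 → T := ![real 1, real 1, bot]
noncomputable def w₂ : Fin 3 → T := ![real 1, bot, real 1]
noncomputable def w₃ : Fin 3 → T := ![bot, real 1, real 1]

/-! A `-∞` entry of a combination `β₁ ⊙ u ⊕ β₂ ⊙ w` at a position where `u` and `w` are
finite forces `β₁ = β₂ = -∞`, hence the whole combination is `-∞`. Each `wᵢ` has a `-∞` entry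
exactly where the other two vectors are finite, while the plain sum `w₁ ⊕ w₂ ⊕ w₃` is `1^ν` in
every coordinate. -/

theorem add_left_comm (a b c : T) : add a (add b c) = add b (add a c) := by
  cases a <;> cases b <;> cases c <;> grind [add]

instance : LeftCommutative add := ⟨add_left_comm⟩

theorem sum_univ_fin {n : ℕ} (f : Fin n → T) : sum Finset.univ f = sumList (List.ofFn f) := by
  have hperm : (Finset.univ : Finset (Fin n)).toList.Perm (List.finRange n) :=
    Multiset.coe_eq_coe.mp (by rw [Finset.coe_toList, Finset.val_univ_fin])
  rw [sum, sumList, sumList, (hperm.map f).foldr_eq, List.ofFn_eq_map]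

theorem add_eq_bot_iff {x y : T} : add x y = bot ↔ x = bot ∧ y = bot := by
  rcases x with _ | a | a <;> rcases y with _ | b | b <;> simp only [add] <;> (try split_ifs) <;>
    simp

theorem mul_eq_bot_iff {x y : T} : mul x y = bot ↔ x = bot ∨ y = bot := by
  rcases x with _ | a | a <;> rcases y with _ | b | b <;> simp [mul]

theorem real_zero_mul (x : T) : mul (real 0) x = x := by
  rcases x with _ | a | a <;> simp [mul]

theorem dependent_of_forall_isGhost_sum {m n : ℕ} {v : Fin m → Fin n → T} (hm : 0 < m)
    (hv : ∀ j, IsGhost (sum Finset.univ fun i => v i j)) : Dependent v :=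
  ⟨fun _ => real 0, fun _ => trivial, ⟨⟨0, hm⟩, by simp⟩, by simpa only [real_zero_mul] using hv⟩

theorem not_exists_combination_of_eq_bot {ι : Type*} {u v w : ι → T} {j k : ι}
    (hvj : v j = bot) (huj : u j ≠ bot) (hwj : w j ≠ bot) (hvk : v k ≠ bot) :
    ¬ ∃ β₁ β₂ : T, ∀ i, v i = add (mul β₁ (u i)) (mul β₂ (w i)) := by
  rintro ⟨β₁, β₂, hβ⟩
  obtain ⟨hβ₁, hβ₂⟩ : β₁ = bot ∧ β₂ = bot := by
    simpa [hvj, add_eq_bot_iff, mul_eq_bot_iff, huj, hwj] using (hβ j).symm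
  exact hvk (by rw [hβ k, hβ₁, hβ₂]; rfl)

/-- `w₁, w₂, w₃` are tropically dependent, yet none is a tropical
linear combination of the other two. -/
theorem stmt4 :
    Dependent ![w₁, w₂, w₃] ∧
    (¬ ∃ β₁ β₂ : T, ∀ j, w₁ j = add (mul β₁ (w₂ j)) (mul β₂ (w₃ j))) ∧
    (¬ ∃ β₁ β₂ : T, ∀ j, w₂ j = add (mul β₁ (w₁ j)) (mul β₂ (w₃ j))) ∧
    (¬ ∃ β₁ β₂ : T, ∀ j, w₃ j = add (mul β₁ (w₁ j)) (mul β₂ (w₂ j))) := by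
  refine ⟨dependent_of_forall_isGhost_sum (by norm_num) fun j => ?_,
    not_exists_combination_of_eq_bot (j := 2) (k := 0) ?_ ?_ ?_ ?_,
    not_exists_combination_of_eq_bot (j := 1) (k := 0) ?_ ?_ ?_ ?_,
    not_exists_combination_of_eq_bot (j := 0) (k := 1) ?_ ?_ ?_ ?_⟩
  · rw [sum_univ_fin]
    fin_cases j <;> simp [sumList, add, IsGhost, w₁, w₂, w₃]
  all_goals simp [w₁, w₂, w₃]

end T
end

section
/- The tropical determinant of an n × n matrix over T can be expanded along any fixed row i: |A| = ⨁_j a_{i,j} ⊙ |A_{i,j}|, where A_{i,j} is the minor obtained by deleting row i and column j. -/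
namespace T

lemma add_assoc' (x y z : T) : add (add x y) z = add x (add y z) := by
  rcases x with _|a|a <;> rcases y with _|b|b <;> rcases z with _|c|c <;>
    simp only [add, max_def] <;> (try split_ifs) <;>
    (try simp only [add, max_def]) <;> (try split_ifs) <;>
    first | rfl | (exfalso; linarith) | (congr 1; linarith)

lemma add_comm' (x y : T) : add x y = add y x := by
  rcases x with _|a|a <;> rcases y with _|b|b <;>
    simp only [add, max_def] <;> (try split_ifs) <;>
    first | rfl | (exfalso; linarith) | (congr 1; linarith)

lemma mul_assoc' (x y z : T) : mul (mul x y) z = mul x (mul y z) := by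
  rcases x with _|a|a <;> rcases y with _|b|b <;> rcases z with _|c|c <;>
    simp only [mul] <;> first | rfl | (congr 1; ring)

lemma mul_comm' (x y : T) : mul x y = mul y x := by
  rcases x with _|a|a <;> rcases y with _|b|b <;> simp only [mul] <;>
    first | rfl | (congr 1; ring)

lemma left_distrib' (x y z : T) : mul x (add y z) = add (mul x y) (mul x z) := by
  rcases x with _|a|a <;> rcases y with _|b|b <;> rcases z with _|c|c <;>
    simp only [add, mul, max_def] <;> (try split_ifs) <;>
    (try simp only [add, mul, max_def]) <;> (try split_ifs) <;>
    first | rfl | (exfalso; linarith) | (congr 1; linarith)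


noncomputable instance instZeroT : Zero T := ⟨bot⟩
noncomputable instance instAddT : Add T := ⟨add⟩
noncomputable instance instOneT : One T := ⟨real 0⟩
noncomputable instance instMulT : Mul T := ⟨mul⟩

noncomputable instance : CommSemiring T where
  add_assoc := add_assoc'
  zero_add x := by cases x <;> rfl
  add_zero x := by cases x <;> rfl
  add_comm := add_comm'
  mul_assoc := mul_assoc'
  one_mul x := by cases x <;> (show mul (real 0) _ = _) <;> simp [mul]
  mul_one x := by cases x <;> (show mul _ (real 0) = _) <;> simp [mul]
  zero_mul _ := rfl
  mul_zero x := by cases x <;> rfl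
  left_distrib := left_distrib'
  right_distrib x y z := by
    show mul (add x y) z = add (mul x z) (mul y z)
    rw [mul_comm', left_distrib', mul_comm' z x, mul_comm' z y]
  mul_comm := mul_comm'
  nsmul := nsmulRec
  nsmul_zero _ := rfl
  nsmul_succ _ _ := rfl

lemma add_eq (x y : T) : add x y = x + y := rfl
lemma mul_eq (x y : T) : mul x y = x * y := rfl
lemma bot_eq : (bot : T) = 0 := rfl
lemma one_eq : (real 0 : T) = 1 := rfl

lemma sum_eq {α : Type*} (s : Finset α) (f : α → T) : T.sum s f = ∑ x ∈ s, f x := by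
  rw [← Finset.sum_map_toList]
  simp only [T.sum, sumList, List.sum_eq_foldr]
  rfl

lemma prodList_eq (l : List T) : prodList l = l.prod := by
  simp only [prodList, List.prod_eq_foldr]
  rfl

lemma permProd_eq {n : ℕ} (A : Matrix (Fin n) (Fin n) T) (σ : Equiv.Perm (Fin n)) :
    permProd A σ = ∏ x, A x (σ x) := by
  rw [permProd, prodList_eq, Fin.prod_univ_def]

lemma det_eq {n : ℕ} (A : Matrix (Fin n) (Fin n) T) :
    det A = ∑ σ : Equiv.Perm (Fin n), ∏ x, A x (σ x) := by
  rw [det, sum_eq]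
  exact Finset.sum_congr rfl fun σ _ => permProd_eq A σ

end T

namespace T

def rowExpand {n : ℕ} (i j : Fin (n+1)) (τ : Equiv.Perm (Fin n)) : Equiv.Perm (Fin (n+1)) :=
  (finSuccEquiv' i).trans (τ.optionCongr.trans (finSuccEquiv' j).symm)

lemma rowExpand_at {n : ℕ} (i j : Fin (n+1)) (τ : Equiv.Perm (Fin n)) :
    rowExpand i j τ i = j := by
  simp [rowExpand, finSuccEquiv'_at, finSuccEquiv'_symm_none]

lemma rowExpand_succAbove {n : ℕ} (i j : Fin (n+1)) (τ : Equiv.Perm (Fin n)) (k : Fin n) :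
    rowExpand i j τ (i.succAbove k) = j.succAbove (τ k) := by
  simp [rowExpand, finSuccEquiv'_succAbove, finSuccEquiv'_symm_some]

lemma rowExpand_bij {n : ℕ} (i : Fin (n+1)) :
    Function.Bijective (fun p : Fin (n+1) × Equiv.Perm (Fin n) => rowExpand i p.1 p.2) := by
  constructor
  · rintro ⟨j, τ⟩ ⟨j', τ'⟩ h
    simp only at h
    have hj : j = j' := by
      have := congrArg (fun σ : Equiv.Perm _ => σ i) h
      simpa [rowExpand_at] using this
    subst hj
    suffices hτ : τ = τ' by simp [hτ]
    refine Equiv.ext fun k => ?_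
    have := congrArg (fun σ : Equiv.Perm _ => σ (i.succAbove k)) h
    simp only [rowExpand_succAbove] at this
    exact Fin.succAbove_right_injective this
  · intro σ
    set j := σ i with hj
    set g : Option (Fin n) ≃ Option (Fin n) :=
      (finSuccEquiv' i).symm.trans (σ.trans (finSuccEquiv' j)) with hg
    have hg0 : g none = none := by
      simp [hg, finSuccEquiv'_symm_none, ← hj, finSuccEquiv'_at]
    refine ⟨(j, g.removeNone), ?_⟩
    simp only
    refine Equiv.ext fun x => ?_
    by_cases hx : x = i
    · subst hx; rw [rowExpand_at]
    · obtain ⟨k, rfl⟩ := Fin.exists_succAbove_eq hx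
      rw [rowExpand_succAbove]
      have hex : ∃ m, g (some k) = some m := by
        rcases h' : g (some k) with _ | m
        · exact absurd (g.injective (h'.trans hg0.symm)) (by simp)
        · exact ⟨m, rfl⟩
      have h1 : some (g.removeNone k) = g (some k) := Equiv.removeNone_some g hex
      have h2 : g (some k) = finSuccEquiv' j (σ (i.succAbove k)) := by
        simp [hg, finSuccEquiv'_symm_some]
      have := congrArg (finSuccEquiv' j).symm (h1.trans h2)
      simpa [finSuccEquiv'_symm_some] using this

end T

/-- expansion of the tropical determinant along any fixed row `i`. -/
theorem stmt6 {n : ℕ} (A : Matrix (Fin (n + 1)) (Fin (n + 1)) T) (i : Fin (n + 1)) :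
    T.det A =
      T.sum Finset.univ
        (fun j => T.mul (A i j) (T.det (A.submatrix i.succAbove j.succAbove))) := by
  rw [T.det_eq, T.sum_eq]
  rw [← Function.Bijective.sum_comp (T.rowExpand_bij i) (fun σ => ∏ x, A x (σ x))]
  rw [Fintype.sum_prod_type]
  refine Finset.sum_congr rfl fun j _ => ?_
  rw [T.mul_eq, T.det_eq, Finset.mul_sum]
  refine Finset.sum_congr rfl fun τ _ => ?_
  rw [Fin.prod_univ_succAbove (fun x => A x (T.rowExpand i j τ x)) i, T.rowExpand_at]
  congr 1
  exact Finset.prod_congr rfl fun k _ => by rw [T.rowExpand_succAbove]; rfl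
end

section
/- Let A be an n × n matrix over T with all entries ⪯ 0^ν and with |A| ≠ -∞, achieved (up to ν-value) by a permutation σ̂. If every column of A contains at least one entry equal to 0 or 0^ν, then a_{i, σ̂(i)} ∈ {0, 0^ν} for some i. -/
namespace Stmt9

noncomputable def val : T → WithBot ℝ
  | .bot => ⊥
  | .real a => (a : WithBot ℝ)
  | .ghost a => (a : WithBot ℝ)

noncomputable def valR : T → ℝ
  | .bot => 0
  | .real a => a
  | .ghost a => a

lemma val_of_ne_bot {x : T} (h : x ≠ .bot) : val x = (valR x : WithBot ℝ) := by
  cases x <;> simp_all [val, valR]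

lemma val_eq_bot_iff {x : T} : val x = ⊥ ↔ x = .bot := by
  cases x <;> simp [val]

lemma nu_val {x y : T} (h : T.nu x = T.nu y) : val x = val y := by
  cases x <;> cases y <;> simp_all [T.nu, val]

lemma val_mul (x y : T) : val (T.mul x y) = val x + val y := by
  cases x <;> cases y <;> simp [T.mul, val, ← WithBot.coe_add]

lemma val_add (x y : T) : val (T.add x y) = max (val x) (val y) := by
  cases x with
  | bot => cases y <;> simp [T.add, val]
  | real a =>
    cases y with
    | bot => simp [T.add, val]
    | real b =>
      show val (if a < b then .real b else if b < a then .real a else .ghost a) = _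
      rcases lt_trichotomy a b with h | h | h
      · rw [if_pos h]
        simp [val, max_eq_right, h.le]
      · rw [if_neg (by simp [h]), if_neg (by simp [h]), h]
        simp [val]
      · rw [if_neg (not_lt.mpr h.le), if_pos h]
        simp [val, max_eq_left, h.le]
    | ghost b =>
      show val (if b < a then .real a else .ghost b) = _
      rcases le_or_gt a b with h | h
      · rw [if_neg (not_lt.mpr h)]
        simp [val, max_eq_right, h]
      · rw [if_pos h]
        simp [val, max_eq_left, h.le]
  | ghost a =>
    cases y with
    | bot => simp [T.add, val]
    | real b =>
      show val (if a < b then .real b else .ghost a) = _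
      rcases le_or_gt b a with h | h
      · rw [if_neg (not_lt.mpr h)]
        simp [val, max_eq_left, h]
      · rw [if_pos h]
        simp [val, max_eq_right, h.le]
    | ghost b =>
      show val (.ghost (max a b)) = _
      simp [val, WithBot.coe_max]

lemma le_val_sumList {x : T} {l : List T} (h : x ∈ l) : val x ≤ val (T.sumList l) := by
  induction l with
  | nil => simp at h
  | cons a l ih =>
    have hs : T.sumList (a :: l) = T.add a (T.sumList l) := rfl
    rw [hs, val_add]
    rcases List.mem_cons.mp h with h | h
    · exact h ▸ le_max_left _ _
    · exact le_trans (ih h) (le_max_right _ _)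

lemma val_permProd_le_det {n : ℕ} (A : Matrix (Fin n) (Fin n) T) (τ : Equiv.Perm (Fin n)) :
    val (T.permProd A τ) ≤ val (T.det A) := by
  apply le_val_sumList
  simp only [List.mem_map]
  exact ⟨τ, Finset.mem_toList.mpr (Finset.mem_univ τ), rfl⟩

lemma val_prodList (l : List T) :
    val (T.prodList l) = (l.map val).foldr (· + ·) (0 : WithBot ℝ) := by
  induction l with
  | nil => simp [T.prodList, val]
  | cons a l ih =>
    have hp : T.prodList (a :: l) = T.mul a (T.prodList l) := rfl
    rw [hp, val_mul, ih]; rfl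

lemma foldr_coe (l : List ℝ) :
    (l.map (fun a : ℝ => (a : WithBot ℝ))).foldr (· + ·) (0 : WithBot ℝ)
      = ((l.sum : ℝ) : WithBot ℝ) := by
  induction l with
  | nil => simp
  | cons a l ih =>
    rw [List.map_cons, List.foldr_cons, ih, List.sum_cons, WithBot.coe_add]

lemma prodList_entries_ne_bot {l : List T} (h : val (T.prodList l) ≠ ⊥) :
    ∀ x ∈ l, x ≠ T.bot := by
  induction l with
  | nil => simp
  | cons a l ih =>
    have hp : T.prodList (a :: l) = T.mul a (T.prodList l) := rfl
    rw [hp, val_mul] at h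
    rw [WithBot.add_ne_bot] at h
    intro x hx
    rcases List.mem_cons.mp hx with rfl | hx
    · exact fun hb => h.1 (hb ▸ (val_eq_bot_iff.mpr rfl))
    · exact ih h.2 x hx

lemma val_permProd {n : ℕ} (A : Matrix (Fin n) (Fin n) T) (τ : Equiv.Perm (Fin n))
    (h : ∀ i, A i (τ i) ≠ T.bot) :
    val (T.permProd A τ) = ((∑ i, valR (A i (τ i)) : ℝ) : WithBot ℝ) := by
  rw [T.permProd, val_prodList, List.map_map]
  have h1 : List.map (val ∘ fun i => A i (τ i)) (List.finRange n)
      = List.map (fun a : ℝ => (a : WithBot ℝ)) (List.map (fun i => valR (A i (τ i))) (List.finRange n)) := by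
    rw [List.map_map]
    exact List.map_congr_left (fun i _ => val_of_ne_bot (h i))
  rw [h1, foldr_coe, Fin.sum_univ_def]

lemma exists_periodic {α : Type*} [Finite α] (f : α → α) (x : α) :
    ∃ y, ∃ m, 0 < m ∧ Function.IsPeriodicPt f m y := by
  obtain ⟨s, t, hst, h⟩ := Finite.exists_ne_map_eq_of_infinite (fun t : ℕ => f^[t] x)
  rcases hst.lt_or_gt with hlt | hlt
  · refine ⟨f^[s] x, t - s, Nat.sub_pos_of_lt hlt, ?_⟩
    show f^[t - s] (f^[s] x) = f^[s] x
    rw [← Function.iterate_add_apply, Nat.sub_add_cancel hlt.le]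
    exact h.symm
  · refine ⟨f^[t] x, s - t, Nat.sub_pos_of_lt hlt, ?_⟩
    show f^[s - t] (f^[t] x) = f^[t] x
    rw [← Function.iterate_add_apply, Nat.sub_add_cancel hlt.le]
    exact h

end Stmt9
/-- if `A ⪯ 0^ν`, `|A| ≠ -∞`, `σ` achieves `|A|` up to ν-value, and every
column contains a `0` or `0^ν` entry, then `a_{i,σ(i)} ∈ {0, 0^ν}` for some `i`. -/
theorem stmt9 {n : ℕ} (A : Matrix (Fin (n + 1)) (Fin (n + 1)) T)
    (hle : ∀ i j, T.le (A i j) (T.ghost 0))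
    (hne : T.det A ≠ T.bot)
    (σ : Equiv.Perm (Fin (n + 1)))
    (hσ : T.nu (T.permProd A σ) = T.nu (T.det A))
    (hcol : ∀ j, ∃ i, A i j = T.real 0 ∨ A i j = T.ghost 0) :
    ∃ i, A i (σ i) = T.real 0 ∨ A i (σ i) = T.ghost 0 := by
  classical
  by_contra hcon
  push_neg at hcon
  open Stmt9 in
  -- basic val facts
  have hvdet : Stmt9.val (T.det A) ≠ ⊥ := fun h => hne (Stmt9.val_eq_bot_iff.mp h)
  have hvσ : Stmt9.val (T.permProd A σ) = Stmt9.val (T.det A) := Stmt9.nu_val hσ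
  have hvpne : Stmt9.val (T.permProd A σ) ≠ ⊥ := hvσ ▸ hvdet
  have hnb : ∀ i, A i (σ i) ≠ T.bot := by
    intro i
    exact Stmt9.prodList_entries_ne_bot hvpne (A i (σ i))
      (List.mem_map.mpr ⟨i, List.mem_finRange i, rfl⟩)
  have hneg : ∀ i, Stmt9.valR (A i (σ i)) < 0 := by
    intro i
    have h1 := hle i (σ i)
    have h2 := hcon i
    have h3 := hnb i
    rcases hA : A i (σ i) with _ | a | a <;> rw [hA] at h1 h2 h3
    · exact absurd rfl h3
    · have ha : a ≤ 0 := h1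
      have ha' : a ≠ 0 := by simpa using h2.1
      simpa [Stmt9.valR] using lt_of_le_of_ne ha ha'
    · have ha : a ≤ 0 := h1
      have ha' : a ≠ 0 := by simpa using h2.2
      simpa [Stmt9.valR] using lt_of_le_of_ne ha ha'
  -- choose a zero entry in each column
  choose r hr using hcol
  set f : Fin (n + 1) → Fin (n + 1) := fun j => σ (r j) with hf
  obtain ⟨y0, m0, hm0, hp0⟩ := Stmt9.exists_periodic f 0
  set m := Function.minimalPeriod f y0 with hm
  have hmpos : 0 < m := hp0.minimalPeriod_pos hm0
  have hiter : f^[m] y0 = y0 := Function.iterate_minimalPeriod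
  have hinjIter := Function.iterate_injOn_Iio_minimalPeriod (f := f) (x := y0)
  set O : Set (Fin (n + 1)) := {z | ∃ t, t < m ∧ f^[t] y0 = z} with hO
  have hy0O : y0 ∈ O := ⟨0, hmpos, rfl⟩
  have hOf : ∀ z ∈ O, f z ∈ O := by
    rintro z ⟨t, ht, rfl⟩
    by_cases h : t + 1 < m
    · exact ⟨t + 1, h, Function.iterate_succ_apply' f t y0⟩
    · have htm : t + 1 = m := by omega
      have h5 : f^[t + 1] y0 = f (f^[t] y0) := Function.iterate_succ_apply' f t y0
      rw [htm, hiter] at h5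
      exact ⟨0, hmpos, by simpa using h5⟩
  have hpred : ∀ z ∈ O, ∃ j ∈ O, f j = z := by
    rintro z ⟨t, ht, rfl⟩
    cases t with
    | zero =>
      refine ⟨f^[m - 1] y0, ⟨m - 1, Nat.sub_lt hmpos one_pos, rfl⟩, ?_⟩
      have h5 : f^[m - 1 + 1] y0 = f (f^[m - 1] y0) := Function.iterate_succ_apply' f (m - 1) y0
      have h6 : m - 1 + 1 = m := by omega
      rw [h6, hiter] at h5
      simpa using h5.symm
    | succ s =>
      exact ⟨f^[s] y0, ⟨s, by omega, rfl⟩, (Function.iterate_succ_apply' f s y0).symm⟩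
  have hinjO : Set.InjOn f O := by
    rintro z1 ⟨t1, ht1, rfl⟩ z2 ⟨t2, ht2, rfl⟩ heq
    have key : ∀ s1 s2 : ℕ, s1 < m → s2 < m → f^[s1 + 1] y0 = f^[s2 + 1] y0 → s1 = s2 := by
      intro s1 s2 hs1 hs2 hs
      rcases eq_or_lt_of_le (Nat.succ_le_of_lt hs1) with h1 | h1 <;>
        rcases eq_or_lt_of_le (Nat.succ_le_of_lt hs2) with h2 | h2
      · omega
      · exfalso
        have h1' : s1 + 1 = m := by omega
        rw [h1', hiter] at hs
        have : (0 : ℕ) = s2 + 1 := hinjIter (Set.mem_Iio.mpr hmpos) (Set.mem_Iio.mpr h2) hs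
        omega
      · exfalso
        have h2' : s2 + 1 = m := by omega
        rw [h2', hiter] at hs
        have : s1 + 1 = 0 := hinjIter (Set.mem_Iio.mpr h1) (Set.mem_Iio.mpr hmpos) hs
        omega
      · have := hinjIter (Set.mem_Iio.mpr h1) (Set.mem_Iio.mpr h2) hs
        omega
    have heq' : f^[t1 + 1] y0 = f^[t2 + 1] y0 := by
      rw [Function.iterate_succ_apply', Function.iterate_succ_apply']
      exact heq
    rw [key t1 t2 ht1 ht2 heq']
  -- the cycle permutation
  set cfun : Fin (n + 1) → Fin (n + 1) := fun z => if z ∈ O then f z else z with hcfun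
  have cinj : Function.Injective cfun := by
    intro z1 z2 h
    simp only [hcfun] at h
    by_cases h1 : z1 ∈ O <;> by_cases h2 : z2 ∈ O
    · rw [if_pos h1, if_pos h2] at h
      exact hinjO h1 h2 h
    · rw [if_pos h1, if_neg h2] at h
      exact absurd (h ▸ hOf z1 h1) h2
    · rw [if_neg h1, if_pos h2] at h
      exact absurd (h ▸ hOf z2 h2) h1
    · rw [if_neg h1, if_neg h2] at h
      exact h
  set c : Equiv.Perm (Fin (n + 1)) := Equiv.ofBijective cfun
    (Finite.injective_iff_bijective.mp cinj) with hcdef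
  have hc : ∀ z ∈ O, c z = f z := by
    intro z hz
    simp only [hcdef, Equiv.ofBijective_apply, hcfun, if_pos hz]
  have hc' : ∀ z, z ∉ O → c z = z := by
    intro z hz
    simp only [hcdef, Equiv.ofBijective_apply, hcfun, if_neg hz]
  set σ' : Equiv.Perm (Fin (n + 1)) := σ.trans c.symm with hσ'def
  have hσ'app : ∀ i, σ' i = c.symm (σ i) := fun i => rfl
  -- rows whose column moves
  have hO' : ∀ i, σ i ∈ O → A i (σ' i) = T.real 0 ∨ A i (σ' i) = T.ghost 0 := by
    intro i hio
    obtain ⟨j, hjO, hfj⟩ := hpred (σ i) hio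
    have hcj : c j = σ i := by rw [hc j hjO, hfj]
    have hσ'i : σ' i = j := by
      rw [hσ'app, ← hcj, Equiv.symm_apply_apply]
    have hij : r j = i := σ.injective (by rw [← hfj])
    rw [hσ'i, ← hij]
    exact hr j
  have hnotO : ∀ i, σ i ∉ O → σ' i = σ i := by
    intro i hio
    rw [hσ'app]
    exact (Equiv.symm_apply_eq c).mpr (hc' (σ i) hio).symm
  -- entries of σ' are not bot
  have hnb' : ∀ i, A i (σ' i) ≠ T.bot := by
    intro i
    by_cases hio : σ i ∈ O
    · rcases hO' i hio with h | h <;> rw [h] <;> simp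
    · rw [hnotO i hio]; exact hnb i
  -- pointwise comparison
  have hptwise : ∀ i ∈ Finset.univ, Stmt9.valR (A i (σ i)) ≤ Stmt9.valR (A i (σ' i)) := by
    intro i _
    by_cases hio : σ i ∈ O
    · rcases hO' i hio with h | h <;> rw [h] <;> exact le_of_lt (by simpa [Stmt9.valR] using hneg i)
    · rw [hnotO i hio]
  -- strict at i0
  set i0 : Fin (n + 1) := r y0 with hi0
  have hσi0O : σ i0 ∈ O := hOf y0 hy0O
  have hstrict : Stmt9.valR (A i0 (σ i0)) < Stmt9.valR (A i0 (σ' i0)) := by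
    rcases hO' i0 hσi0O with h | h <;> rw [h] <;> simpa [Stmt9.valR] using hneg i0
  have hsum : ∑ i, Stmt9.valR (A i (σ i)) < ∑ i, Stmt9.valR (A i (σ' i)) :=
    Finset.sum_lt_sum hptwise ⟨i0, Finset.mem_univ i0, hstrict⟩
  have e1 : Stmt9.val (T.permProd A σ') ≤ Stmt9.val (T.det A) := Stmt9.val_permProd_le_det A σ'
  have e2 : Stmt9.val (T.permProd A σ) = ((∑ i, Stmt9.valR (A i (σ i)) : ℝ) : WithBot ℝ) :=
    Stmt9.val_permProd A σ hnb
  have e3 : Stmt9.val (T.permProd A σ') = ((∑ i, Stmt9.valR (A i (σ' i)) : ℝ) : WithBot ℝ) :=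
    Stmt9.val_permProd A σ' hnb'
  rw [e3, ← hvσ, e2] at e1
  exact absurd (WithBot.coe_le_coe.mp e1) (not_le.mpr hsum)
end

section
/- An n × n matrix A over T with all entries ⪯ 0^ν, each of whose columns contains either at least two entries equal to 0 or at least one entry equal to 0^ν, is tropically singular. -/
namespace T

def val : T → WithBot ℝ
  | bot => ⊥
  | real a => a
  | ghost a => a

lemma sumList_cons (x : T) (l : List T) : sumList (x :: l) = add x (sumList l) := rfl

lemma prodList_cons (x : T) (l : List T) : prodList (x :: l) = mul x (prodList l) := rfl

lemma val_add (x y : T) : val (add x y) = max (val x) (val y) := by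
  rcases x with _ | a | a <;> rcases y with _ | b | b <;>
    simp only [add, val, bot_le, max_eq_left, max_eq_right, ← WithBot.coe_max] <;>
    (try split_ifs) <;> simp only [WithBot.coe_inj] <;> grind

lemma val_mul (x y : T) : val (mul x y) = val x + val y := by
  rcases x with _ | a | a <;> rcases y with _ | b | b <;> simp [mul, val]

lemma val_le_val {x y : T} (h : le x y) : val x ≤ val y := by
  rcases x with _ | a | a <;> rcases y with _ | b | b <;> simp_all [le, val, le_of_lt]

lemma add_eq_real {x y : T} {v : ℝ} (h : add x y = real v) :
    (x = real v ∧ val y < v) ∨ (val x < v ∧ y = real v) := by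
  rcases x with _ | a | a <;> rcases y with _ | b | b <;> simp only [add] at h <;>
    (try split_ifs at h) <;> simp_all [val]

lemma val_le_val_sumList {l : List T} {x : T} (hx : x ∈ l) : val x ≤ val (sumList l) := by
  induction l with
  | nil => simp at hx
  | cons a l ih =>
    rw [sumList_cons, val_add]
    rcases List.mem_cons.mp hx with rfl | hx
    · exact le_max_left _ _
    · exact (ih hx).trans (le_max_right _ _)

lemma exists_eq_real_of_sumList_map_eq_real {α : Type*} {l : List α} {f : α → T} {v : ℝ}
    (h : sumList (l.map f) = real v) :
    ∃ x ∈ l, f x = real v ∧ ∀ y ∈ l, y ≠ x → val (f y) < v := by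
  induction l with
  | nil => simp [sumList] at h
  | cons a l ih =>
    rw [List.map_cons, sumList_cons] at h
    rcases add_eq_real h with ⟨ha, hl⟩ | ⟨ha, hl⟩
    · refine ⟨a, List.mem_cons_self, ha, fun y hy hya => ?_⟩
      have hy : y ∈ l := (List.mem_cons.mp hy).resolve_left hya
      exact (val_le_val_sumList (List.mem_map_of_mem hy)).trans_lt hl
    · obtain ⟨x, hx, hfx, hlt⟩ := ih hl
      refine ⟨x, List.mem_cons_of_mem a hx, hfx, fun y hy hyx => ?_⟩
      rcases List.mem_cons.mp hy with rfl | hy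
      · exact ha
      · exact hlt y hy hyx

lemma isGhost_sum_of_forall_exists_ne {α : Type*} {s : Finset α} {f : α → T}
    (h : ∀ x ∈ s, ∀ v, f x = real v → ∃ y ∈ s, y ≠ x ∧ (v : WithBot ℝ) ≤ val (f y)) :
    IsGhost (sum s f) := by
  rcases hs : sum s f with _ | v | v
  · trivial
  · obtain ⟨x, hx, hfx, hlt⟩ := exists_eq_real_of_sumList_map_eq_real hs
    rw [Finset.mem_toList] at hx
    obtain ⟨y, hy, hyx, hle⟩ := h x hx v hfx
    exact (hle.not_gt (hlt y (Finset.mem_toList.mpr hy) hyx)).elim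
  · trivial

lemma isGhost_mul_left {x : T} (hx : IsGhost x) (y : T) : IsGhost (mul x y) := by
  rcases x with _ | a | a <;> rcases y with _ | b | b <;> trivial

lemma isGhost_mul_right (x : T) {y : T} (hy : IsGhost y) : IsGhost (mul x y) := by
  rcases x with _ | a | a <;> rcases y with _ | b | b <;> trivial

lemma isGhost_prodList_of_mem {l : List T} {x : T} (hx : x ∈ l) (hg : IsGhost x) :
    IsGhost (prodList l) := by
  induction l with
  | nil => simp at hx
  | cons a l ih =>
    rw [prodList_cons]
    rcases List.mem_cons.mp hx with rfl | hx
    · exact isGhost_mul_left hg _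
    · exact isGhost_mul_right _ (ih hx)

lemma val_prodList (l : List T) : val (prodList l) = (l.map val).sum := by
  induction l with
  | nil => rfl
  | cons a l ih => rw [prodList_cons, val_mul, ih, List.map_cons, List.sum_cons]

lemma isGhost_permProd {n : ℕ} (A : Matrix (Fin n) (Fin n) T) (σ : Equiv.Perm (Fin n)) {i : Fin n}
    (h : IsGhost (A i (σ i))) : IsGhost (permProd A σ) :=
  isGhost_prodList_of_mem (List.mem_map_of_mem (List.mem_finRange i)) h

lemma val_permProd {n : ℕ} (A : Matrix (Fin n) (Fin n) T) (σ : Equiv.Perm (Fin n)) :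
    val (permProd A σ) = ∑ i, val (A i (σ i)) := by
  rw [permProd, val_prodList, List.map_map, Fin.sum_univ_def]
  rfl

lemma exists_ne_val_eq_zero {ι : Type*} {c : ι → T}
    (hc : (∃ i₁ i₂, i₁ ≠ i₂ ∧ c i₁ = real 0 ∧ c i₂ = real 0) ∨ ∃ i, c i = ghost 0)
    {r : ι} (hr : ¬ IsGhost (c r)) : ∃ i ≠ r, val (c i) = 0 := by
  rcases hc with ⟨i₁, i₂, hne, h₁, h₂⟩ | ⟨i, hi⟩
  · by_cases h : i₁ = r
    · exact ⟨i₂, fun h₂r => hne (h.trans h₂r.symm), by rw [h₂]; rfl⟩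
    · exact ⟨i₁, h, by rw [h₁]; rfl⟩
  · exact ⟨i, fun hir => hr (hir ▸ hi ▸ trivial), by rw [hi]; rfl⟩

end T

open Function in
lemma Function.periodicPts_nonempty {α : Type*} [Finite α] [Nonempty α] (f : α → α) :
    (periodicPts f).Nonempty := by
  obtain ⟨m, n, hmn, heq⟩ :=
    Finite.exists_ne_map_eq_of_infinite fun k : ℕ => f^[k] (Classical.arbitrary α)
  wlog hlt : m < n generalizing m n
  · exact this n m hmn.symm heq.symm (by omega)
  refine ⟨f^[m] (Classical.arbitrary α), mk_mem_periodicPts (Nat.sub_pos_of_lt hlt) ?_⟩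
  rw [IsPeriodicPt, IsFixedPt, ← iterate_add_apply, Nat.sub_add_cancel hlt.le, heq]

namespace Equiv.Perm

variable {α : Type*} [Finite α]

lemma exists_ne_one_forall_eq_self_or_eq_apply [Nonempty α] (g : α → α) (hg : ∀ x, g x ≠ x) :
    ∃ π : Perm α, π ≠ 1 ∧ ∀ x, π x = x ∨ π x = g x := by
  classical
  let π : Perm α := ofSubtype ((Function.bijOn_periodicPts g).equiv g)
  have hπ : ∀ x, π x = x ∨ π x = g x := fun x => by
    by_cases hx : x ∈ Function.periodicPts g
    · exact Or.inr (ofSubtype_apply_of_mem _ hx)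
    · exact Or.inl (ofSubtype_apply_of_not_mem _ hx)
  obtain ⟨x, hx⟩ := Function.periodicPts_nonempty g
  have hπx : π x = g x := ofSubtype_apply_of_mem _ hx
  exact ⟨π, fun h => hg x (by rw [← hπx, h, one_apply]), hπ⟩

lemma exists_ne_forall_eq_apply_or_apply_eq [Nonempty α] (σ : Perm α) (w : α → α)
    (hw : ∀ j, w j ≠ σ.symm j) : ∃ τ : Perm α, τ ≠ σ ∧ ∀ i, τ i = σ i ∨ w (τ i) = i := by
  obtain ⟨π, hπ1, hπ⟩ := exists_ne_one_forall_eq_self_or_eq_apply (σ ∘ w)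
    fun j h => hw j (σ.eq_symm_apply.mpr h)
  -- with `τ = π⁻¹ * σ`, `σ i = π (τ i)` is either `τ i` or `σ (w (τ i))`
  refine ⟨π⁻¹ * σ, fun h => hπ1 (inv_eq_one.mp (mul_eq_right.mp h)), fun i => ?_⟩
  rcases hπ ((π⁻¹ * σ) i) with h | h <;> rw [mul_apply, coe_inv, apply_symm_apply] at h
  · exact Or.inl h.symm
  · exact Or.inr (σ.injective h).symm

end Equiv.Perm

/-- a matrix `⪯ 0^ν` each of whose columns contains either two
`0`-entries or a `0^ν`-entry is tropically singular. -/
theorem stmt11 {n : ℕ} (A : Matrix (Fin (n + 1)) (Fin (n + 1)) T)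
    (hle : ∀ i j, T.le (A i j) (T.ghost 0))
    (hcol : ∀ j, (∃ i₁ i₂, i₁ ≠ i₂ ∧ A i₁ j = T.real 0 ∧ A i₂ j = T.real 0) ∨
      ∃ i, A i j = T.ghost 0) :
    T.IsGhost (T.det A) := by
  refine T.isGhost_sum_of_forall_exists_ne fun σ _ v hσ => ?_
  have hσreal : ∀ j, ¬ T.IsGhost (A (σ.symm j) j) := fun j hg => by
    have := T.isGhost_permProd A σ (i := σ.symm j) (by rwa [σ.apply_symm_apply])
    rwa [hσ] at this
  choose w hwσ hw using fun j => T.exists_ne_val_eq_zero (hcol j) (hσreal j)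
  obtain ⟨τ, hτσ, hτ⟩ := σ.exists_ne_forall_eq_apply_or_apply_eq w hwσ
  refine ⟨τ, Finset.mem_univ τ, hτσ, ?_⟩
  change T.val (T.real v) ≤ _
  rw [← hσ, T.val_permProd, T.val_permProd]
  refine Finset.sum_le_sum fun i _ => ?_
  rcases hτ i with h | h
  · rw [h]
  · calc T.val (A i (σ i)) ≤ 0 := T.val_le_val (hle i (σ i))
      _ = T.val (A i (τ i)) := by rw [← hw (τ i), h]
end
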